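/- arXiv:2205.07344 — 2 statements merged into one kernel-verified Lean document; each statement's English description precedes it below -/
import Mathlib

section
/- Under Assumption 1, the robust value function is Lipschitz in the policy parameter: for all θ₁, θ₂ ∈ Θ and every s ∈ S, |V^{π_{θ₁}}(s) − V^{π_{θ₂}}(s)| ≤ (k_π·|A|/(1−γ)²)·‖θ₁ − θ₂‖. -/
set_option autoImplicit false

open Finset

/-!
Both `V θ₁` and `V θ₂` are fixed points of their robust Bellman operators. Writing the
difference of the two Bellman right-hand sides as
`∑ₐ (π₁ - π₂) Q₁ + ∑ₐ π₂ (Q₁ - Q₂)`, the first sum is at most `|A| · kπ ‖θ₁ - θ₂‖ · ‖Q₁‖`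
by the mean value theorem and `‖Q₁‖ ≤ 1/(1-γ)`, and the second is at most
`γ ‖V θ₁ - V θ₂‖` because both the nominal expectation and the worst-case `max` are
1-Lipschitz in the sup norm. Solving `x ≤ K + γ x` gives the factor `1/(1-γ)` twice.
-/

theorem abs_sub_le_of_hasGradientWithinAt {E : Type*} [NormedAddCommGroup E]
    [InnerProductSpace ℝ E] [CompleteSpace E] {f : E → ℝ} {f' : E → E} {s : Set E}
    (hs : Convex ℝ s) (hf : ∀ x ∈ s, HasGradientWithinAt f (f' x) s x) {C : ℝ}
    (hC : ∀ x ∈ s, ‖f' x‖ ≤ C) {x y : E} (hx : x ∈ s) (hy : y ∈ s) :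
    |f x - f y| ≤ C * ‖x - y‖ :=
  hs.norm_image_sub_le_of_norm_hasFDerivWithin_le (fun z hz => (hf z hz).hasFDerivWithinAt)
    (fun z hz => by rw [LinearIsometryEquiv.norm_map]; exact hC z hz) hy hx

theorem le_div_one_sub_of_le_add_mul {x K γ : ℝ} (hγ : γ < 1) (h : x ≤ K + γ * x) :
    x ≤ K / (1 - γ) := by
  rw [le_div_iff₀ (by linarith)]
  linarith

theorem abs_sum_mul_le_of_mem_stdSimplex {ι : Type*} [Fintype ι] {w : ι → ℝ}
    (hw : w ∈ stdSimplex ℝ ι) {f : ι → ℝ} {M : ℝ} (hf : ∀ i, |f i| ≤ M) :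
    |∑ i, w i * f i| ≤ M :=
  calc |∑ i, w i * f i| ≤ ∑ i, |w i * f i| := abs_sum_le_sum_abs _ _
    _ ≤ ∑ i, w i * M := by
        gcongr with i
        rw [abs_mul, abs_of_nonneg (hw.1 i)]
        exact mul_le_mul_of_nonneg_left (hf i) (hw.1 i)
    _ = M := by rw [← sum_mul, hw.2, one_mul]

theorem abs_sup'_sub_sup'_le_norm_sub {ι : Type*} [Fintype ι] [Nonempty ι] (f g : ι → ℝ) :
    |univ.sup' univ_nonempty f - univ.sup' univ_nonempty g| ≤ ‖f - g‖ := by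
  have key : ∀ u v : ι → ℝ,
      univ.sup' univ_nonempty u ≤ univ.sup' univ_nonempty v + ‖u - v‖ := fun u v =>
    sup'_le _ _ fun i _ => by
      have hi : u i - v i ≤ ‖u - v‖ := (le_abs_self _).trans (norm_le_pi_norm (u - v) i)
      linarith [le_sup' v (mem_univ i)]
  rw [abs_le]
  constructor
  · linarith [key g f, norm_sub_rev f g]
  · linarith [key f g]

section RobustBellman

variable {S A : Type*} [Fintype S] [Nonempty S]
  (c : S → A → ℝ) (γ R : ℝ) (p : S → A → S → ℝ)

/-- The last term is the worst case over the `R`-contamination uncertainty set around `p`. -/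
noncomputable def robustQ (V : S → ℝ) (s : S) (a : A) : ℝ :=
  c s a + γ * (1 - R) * ∑ s', p s a s' * V s' + γ * R * univ.sup' univ_nonempty V

noncomputable def robustBellman [Fintype A] (π : S → A → ℝ) (V : S → ℝ) (s : S) : ℝ :=
  ∑ a, π s a * robustQ c γ R p V s a

variable {c γ R p}

theorem abs_robustQ_sub_robustQ_le (hγ : 0 ≤ γ) (hR : R ∈ Set.Icc (0 : ℝ) 1)
    (hp : ∀ s a, p s a ∈ stdSimplex ℝ S) (V W : S → ℝ) (s : S) (a : A) :
    |robustQ c γ R p V s a - robustQ c γ R p W s a| ≤ γ * ‖V - W‖ := by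
  have hexp : |∑ s', p s a s' * V s' - ∑ s', p s a s' * W s'| ≤ ‖V - W‖ := by
    rw [← sum_sub_distrib]
    simp_rw [← mul_sub]
    exact abs_sum_mul_le_of_mem_stdSimplex (hp s a) fun s' => norm_le_pi_norm (V - W) s'
  have hmax := abs_sup'_sub_sup'_le_norm_sub V W
  have hγR : 0 ≤ γ * R := mul_nonneg hγ hR.1
  have hγR' : 0 ≤ γ * (1 - R) := mul_nonneg hγ (by linarith [hR.2])
  calc |robustQ c γ R p V s a - robustQ c γ R p W s a|
      = |γ * (1 - R) * (∑ s', p s a s' * V s' - ∑ s', p s a s' * W s')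
          + γ * R * (univ.sup' univ_nonempty V - univ.sup' univ_nonempty W)| := by
        unfold robustQ; ring_nf
    _ ≤ γ * (1 - R) * ‖V - W‖ + γ * R * ‖V - W‖ := by
        refine (abs_add_le _ _).trans (add_le_add ?_ ?_)
        · rw [abs_mul, abs_of_nonneg hγR']; exact mul_le_mul_of_nonneg_left hexp hγR'
        · rw [abs_mul, abs_of_nonneg hγR]; exact mul_le_mul_of_nonneg_left hmax hγR
    _ = γ * ‖V - W‖ := by ring

theorem abs_robustQ_le (hc : ∀ s a, c s a ∈ Set.Icc (0 : ℝ) 1) (hγ : 0 ≤ γ)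
    (hR : R ∈ Set.Icc (0 : ℝ) 1) (hp : ∀ s a, p s a ∈ stdSimplex ℝ S) (V : S → ℝ)
    (s : S) (a : A) : |robustQ c γ R p V s a| ≤ 1 + γ * ‖V‖ := by
  have hzero : robustQ c γ R p 0 s a = c s a := by simp [robustQ]
  have hdiff := abs_robustQ_sub_robustQ_le (c := c) hγ hR hp V 0 s a
  rw [hzero, sub_zero] at hdiff
  have hcs : |c s a| ≤ 1 := abs_le.mpr ⟨by linarith [(hc s a).1], (hc s a).2⟩
  linarith [abs_sub_abs_le_abs_sub (robustQ c γ R p V s a) (c s a)]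

variable [Fintype A]

theorem norm_le_of_robustBellman_eq (hc : ∀ s a, c s a ∈ Set.Icc (0 : ℝ) 1)
    (hγ : γ ∈ Set.Ico (0 : ℝ) 1) (hR : R ∈ Set.Icc (0 : ℝ) 1)
    (hp : ∀ s a, p s a ∈ stdSimplex ℝ S) {π : S → A → ℝ} (hπ : ∀ s, π s ∈ stdSimplex ℝ A)
    {V : S → ℝ} (hV : ∀ s, V s = robustBellman c γ R p π V s) : ‖V‖ ≤ 1 / (1 - γ) := by
  refine le_div_one_sub_of_le_add_mul hγ.2 ((pi_norm_le_iff_of_nonempty _).mpr fun s => ?_)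
  rw [Real.norm_eq_abs, hV s]
  exact abs_sum_mul_le_of_mem_stdSimplex (hπ s) (abs_robustQ_le hc hγ.1 hR hp V s)

theorem abs_robustBellman_sub_robustBellman_le (hγ : 0 ≤ γ) (hR : R ∈ Set.Icc (0 : ℝ) 1)
    (hp : ∀ s a, p s a ∈ stdSimplex ℝ S) {π₁ π₂ : S → A → ℝ} {s : S}
    (hπ₂ : π₂ s ∈ stdSimplex ℝ A) {δ B : ℝ} (hδ : ∀ a, |π₁ s a - π₂ s a| ≤ δ)
    (V₁ V₂ : S → ℝ) (hB : ∀ a, |robustQ c γ R p V₁ s a| ≤ B) :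
    |robustBellman c γ R p π₁ V₁ s - robustBellman c γ R p π₂ V₂ s|
      ≤ Fintype.card A * (δ * B) + γ * ‖V₁ - V₂‖ := by
  have hsplit : robustBellman c γ R p π₁ V₁ s - robustBellman c γ R p π₂ V₂ s
      = ∑ a, (π₁ s a - π₂ s a) * robustQ c γ R p V₁ s a
        + ∑ a, π₂ s a * (robustQ c γ R p V₁ s a - robustQ c γ R p V₂ s a) := by
    simp only [robustBellman, ← sum_add_distrib, ← sum_sub_distrib]
    exact sum_congr rfl fun a _ => by ring
  have hpolicy : |∑ a, (π₁ s a - π₂ s a) * robustQ c γ R p V₁ s a|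
      ≤ Fintype.card A * (δ * B) :=
    calc _ ≤ ∑ a, |(π₁ s a - π₂ s a) * robustQ c γ R p V₁ s a| := abs_sum_le_sum_abs _ _
      _ ≤ ∑ _a : A, δ * B := by
          gcongr with a
          rw [abs_mul]
          exact mul_le_mul (hδ a) (hB a) (abs_nonneg _) ((abs_nonneg _).trans (hδ a))
      _ = Fintype.card A * (δ * B) := by rw [sum_const, card_univ, nsmul_eq_mul]
  rw [hsplit]
  exact (abs_add_le _ _).trans (add_le_add hpolicy
    (abs_sum_mul_le_of_mem_stdSimplex hπ₂ fun a => abs_robustQ_sub_robustQ_le hγ hR hp V₁ V₂ s a))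

end RobustBellman

theorem stmt_3_general {S A : Type*} [Fintype S] [Fintype A] [Nonempty S] {N : ℕ}
    (c : S → A → ℝ) (hc : ∀ s a, c s a ∈ Set.Icc (0 : ℝ) 1)
    (γ : ℝ) (hγ : γ ∈ Set.Ico (0 : ℝ) 1)
    (R : ℝ) (hR : R ∈ Set.Icc (0 : ℝ) 1)
    (p : S → A → S → ℝ) (hp : ∀ s a, p s a ∈ stdSimplex ℝ S)
    (Θ : Set (EuclideanSpace ℝ (Fin N))) (hΘ : Convex ℝ Θ)
    (π : EuclideanSpace ℝ (Fin N) → S → A → ℝ)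
    (hπ : ∀ θ ∈ Θ, ∀ s, π θ s ∈ stdSimplex ℝ A)
    (kπ : ℝ)
    (D : EuclideanSpace ℝ (Fin N) → S → A → EuclideanSpace ℝ (Fin N))
    (hD : ∀ θ ∈ Θ, ∀ s a, HasGradientWithinAt (fun θ' => π θ' s a) (D θ s a) Θ θ)
    (hDb : ∀ θ ∈ Θ, ∀ s a, ‖D θ s a‖ ≤ kπ)
    (V : EuclideanSpace ℝ (Fin N) → S → ℝ)
    (hV : ∀ θ ∈ Θ, ∀ s, V θ s = ∑ a, π θ s a * (c s a
      + γ * (1 - R) * ∑ s', p s a s' * V θ s'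
      + γ * R * univ.sup' univ_nonempty (V θ)))
    (θ₁ θ₂ : EuclideanSpace ℝ (Fin N)) (h₁ : θ₁ ∈ Θ) (h₂ : θ₂ ∈ Θ) (s : S) :
    |V θ₁ s - V θ₂ s| ≤ kπ * Fintype.card A / (1 - γ) ^ 2 * ‖θ₁ - θ₂‖ := by
  have hfix : ∀ θ ∈ Θ, ∀ s, V θ s = robustBellman c γ R p (π θ) (V θ) s := hV
  have hγ1 : 0 < 1 - γ := by linarith [hγ.2]
  have hQ : ∀ s a, |robustQ c γ R p (V θ₁) s a| ≤ 1 / (1 - γ) := fun s a => calc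
    _ ≤ 1 + γ * ‖V θ₁‖ := abs_robustQ_le hc hγ.1 hR hp (V θ₁) s a
    _ ≤ 1 + γ * (1 / (1 - γ)) := by
        gcongr
        exacts [hγ.1, norm_le_of_robustBellman_eq hc hγ hR hp (hπ θ₁ h₁) (hfix θ₁ h₁)]
    _ = 1 / (1 - γ) := by field_simp; ring
  have hstep : ‖V θ₁ - V θ₂‖ ≤ Fintype.card A * (kπ * ‖θ₁ - θ₂‖ * (1 / (1 - γ)))
      + γ * ‖V θ₁ - V θ₂‖ := by
    refine (pi_norm_le_iff_of_nonempty _).mpr fun s' => ?_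
    rw [Pi.sub_apply, Real.norm_eq_abs, hfix θ₁ h₁, hfix θ₂ h₂]
    exact abs_robustBellman_sub_robustBellman_le hγ.1 hR hp (hπ θ₂ h₂ s')
      (fun a => abs_sub_le_of_hasGradientWithinAt hΘ (fun θ hθ => hD θ hθ s' a)
        (fun θ hθ => hDb θ hθ s' a) h₁ h₂) _ _ (hQ s')
  calc |V θ₁ s - V θ₂ s| ≤ ‖V θ₁ - V θ₂‖ := norm_le_pi_norm (V θ₁ - V θ₂) s
    _ ≤ _ / (1 - γ) := le_div_one_sub_of_le_add_mul hγ.2 hstep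
    _ = kπ * Fintype.card A / (1 - γ) ^ 2 * ‖θ₁ - θ₂‖ := by field_simp

/-- **Lipschitz continuity of the robust value function in the policy parameter**
(Lemma 4 / Assumption 1 setting): if `θ ↦ π_θ(a|s)` is differentiable on the convex set
`Θ ⊆ ℝ^N` with gradients bounded by `k_π`, and `V θ` is the robust value function of `π_θ`
(the fixed point of the robust Bellman operator), then for all `θ₁, θ₂ ∈ Θ` and `s ∈ S`,
`|V^{π_{θ₁}}(s) - V^{π_{θ₂}}(s)| ≤ (k_π·|A|/(1-γ)²)·‖θ₁ - θ₂‖`. -/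
theorem stmt_3 {S A : Type*} [Fintype S] [Fintype A] [Nonempty S] [Nonempty A] {N : ℕ}
    (c : S → A → ℝ) (hc : ∀ s a, c s a ∈ Set.Icc (0 : ℝ) 1)
    (γ : ℝ) (hγ : γ ∈ Set.Ico (0 : ℝ) 1)
    (R : ℝ) (hR : R ∈ Set.Icc (0 : ℝ) 1)
    (p : S → A → S → ℝ) (hp : ∀ s a, p s a ∈ stdSimplex ℝ S)
    (Θ : Set (EuclideanSpace ℝ (Fin N))) (hΘ : Convex ℝ Θ)
    (π : EuclideanSpace ℝ (Fin N) → S → A → ℝ)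
    (hπ : ∀ θ ∈ Θ, ∀ s, π θ s ∈ stdSimplex ℝ A)
    (kπ : ℝ) (hkπ : 0 < kπ)
    (D : EuclideanSpace ℝ (Fin N) → S → A → EuclideanSpace ℝ (Fin N))
    (hD : ∀ θ ∈ Θ, ∀ s a, HasGradientWithinAt (fun θ' => π θ' s a) (D θ s a) Θ θ)
    (hDb : ∀ θ ∈ Θ, ∀ s a, ‖D θ s a‖ ≤ kπ)
    (V : EuclideanSpace ℝ (Fin N) → S → ℝ)
    (hV : ∀ θ ∈ Θ, ∀ s, V θ s = ∑ a, π θ s a * (c s a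
      + γ * (1 - R) * ∑ s', p s a s' * V θ s'
      + γ * R * univ.sup' univ_nonempty (V θ)))
    (θ₁ θ₂ : EuclideanSpace ℝ (Fin N)) (h₁ : θ₁ ∈ Θ) (h₂ : θ₂ ∈ Θ) (s : S) :
    |V θ₁ s - V θ₂ s| ≤ kπ * Fintype.card A / (1 - γ) ^ 2 * ‖θ₁ - θ₂‖ :=
  stmt_3_general c hc γ hγ R hR p hp Θ hΘ π hπ kπ D hD hDb V hV θ₁ θ₂ h₁ h₂ s
end

section
/- Robust policy gradient, subgradient part: under Assumption 1, for every probability distribution ρ on S, every θ ∈ Θ, and every choice of maximizing state s_θ, the vector ψ_ρ(θ) is a Fréchet subgradient of J_ρ at θ (relative to Θ). -/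
set_option autoImplicit false

open Finset

/-- The stochastic matrix of a policy `π` under the kernel `p`:
`P_π(s,s') = ∑ a, π(a|s)·p(s'|s,a)`. -/
noncomputable def pmat {S A : Type*} [Fintype A] (π : S → A → ℝ) (p : S → A → S → ℝ) :
    Matrix S S ℝ :=
  Matrix.of fun s s' => ∑ a, π s a * p s a s'

/-- The discounted visitation distribution
`d^π_s(s') = (1-γ+γR)·∑_{t≥0} (γ(1-R))^t·(P_π^t)(s,s')`. -/
noncomputable def dvisit {S A : Type*} [Fintype S] [Fintype A] [DecidableEq S]
    (γ R : ℝ) (π : S → A → ℝ) (p : S → A → S → ℝ) (s s' : S) : ℝ :=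
  (1 - γ + γ * R) * ∑' t : ℕ, (γ * (1 - R)) ^ t * ((pmat π p) ^ t) s s'

/-- `u` is a Fréchet subgradient of `f` at `x` relative to `Θ`:
`liminf_{h→0, h≠0, x+h∈Θ} (f(x+h) - f(x) - ⟨h,u⟩)/‖h‖ ≥ 0`, expressed in ε-δ form. -/
def IsFrechetSubgradientWithin {E : Type*} [NormedAddCommGroup E] [InnerProductSpace ℝ E]
    (f : E → ℝ) (Θ : Set E) (x u : E) : Prop :=
  ∀ ε > (0 : ℝ), ∃ δ > (0 : ℝ), ∀ h : E, h ≠ 0 → ‖h‖ < δ → x + h ∈ Θ →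
    -ε * ‖h‖ ≤ f (x + h) - f x - (inner ℝ h u : ℝ)

/-!
Fix the maximising state `s_θ`. For `θ'` near `θ`, replacing the maximum in the robust Bellman
equation of `V^{π_θ'}` by the value at `s_θ` can only lower its right-hand side, so
`Z = V^{π_θ'} - V^{π_θ}` is a supersolution of the *frozen* linear equation
`Z ≥ Δ + γ(1-R) P_{θ'} Z + γR Z(s_θ)`, where `Δ(s) = ∑ₐ (π_θ' - π_θ)(a|s) Q^{π_θ}(s,a)`.
The frozen operator has nonnegative rows summing to `γ < 1`, so a minimum principle compares `Z`
with the exact solution `Y` of the frozen equation for `P_θ` and the linearised source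
`∑ₐ ⟨θ' - θ, ∇π_θ(a|s)⟩ Q^{π_θ}(s,a)`, up to a first-order Taylor remainder plus a product of two
`O(‖θ' - θ‖)` terms, i.e. up to `o(‖θ' - θ‖)`. By Sherman–Morrison, `Y` is explicit in terms of the
Neumann series of `γ(1-R) P_θ`, whose rows are the visitation distributions divided by `1 - γ + γR`,
and `ρ·Y = ⟨θ' - θ, ψ_ρ(θ)⟩`.
-/

open Matrix Filter Topology Asymptotics

section FrozenOperator

variable {S : Type*} [Fintype S] [DecidableEq S] {β α : ℝ} {P : Matrix S S ℝ}

/-- `(1 - β P)⁻¹`, written entrywise as the Neumann series `∑ₜ βᵗ Pᵗ`. -/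
noncomputable def neumann (β : ℝ) (P : Matrix S S ℝ) : Matrix S S ℝ :=
  Matrix.of fun s s' => ∑' t : ℕ, β ^ t * (P ^ t) s s'

lemma summable_neumann (hP : P ∈ rowStochastic ℝ S) (hβ₀ : 0 ≤ β) (hβ₁ : β < 1) (s s' : S) :
    Summable fun t : ℕ => β ^ t * (P ^ t) s s' := by
  refine .of_nonneg_of_le (fun t => ?_) (fun t => ?_) (summable_geometric_of_lt_one hβ₀ hβ₁)
  · exact mul_nonneg (pow_nonneg hβ₀ t) (nonneg_of_mem_rowStochastic (pow_mem hP t))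
  · exact mul_le_of_le_one_right (pow_nonneg hβ₀ t) (le_one_of_mem_rowStochastic (pow_mem hP t))

lemma neumann_eq_one_add (hP : P ∈ rowStochastic ℝ S) (hβ₀ : 0 ≤ β) (hβ₁ : β < 1) :
    neumann β P = 1 + β • (P * neumann β P) := by
  ext s s'
  have hshift : ∀ t : ℕ, β ^ (t + 1) * (P ^ (t + 1)) s s'
      = ∑ x, β * (P s x * (β ^ t * (P ^ t) x s')) := fun t => by
    rw [pow_succ' P, mul_apply, Finset.mul_sum]
    exact Finset.sum_congr rfl fun x _ => by ring
  simp only [neumann, of_apply, Matrix.add_apply, Matrix.smul_apply, mul_apply, smul_eq_mul,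
    Finset.mul_sum]
  rw [(summable_neumann hP hβ₀ hβ₁ s s').tsum_eq_zero_add, tsum_congr hshift,
    Summable.tsum_finsetSum fun x _ =>
      ((summable_neumann hP hβ₀ hβ₁ x s').mul_left (P s x)).mul_left β]
  simp [tsum_mul_left, one_apply]

/-- The solution `Y` of `Y = ℓ + β P Y + α Y(s₀) 𝟙`: by Sherman–Morrison, since `(1 - β P)⁻¹ 𝟙`
is a multiple of `𝟙`, the rank-one term only adds a constant to `(1 - β P)⁻¹ ℓ`. -/
noncomputable def frozenResolvent (β α : ℝ) (P : Matrix S S ℝ) (s₀ : S) (ℓ : S → ℝ) : S → ℝ :=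
  neumann β P *ᵥ ℓ + (α / (1 - β - α) * (neumann β P *ᵥ ℓ) s₀) • 1

lemma frozenResolvent_eq (hP : P ∈ rowStochastic ℝ S) (hβ₀ : 0 ≤ β) (hβ₁ : β < 1)
    (hβα : β + α ≠ 1) (s₀ : S) (ℓ : S → ℝ) (s : S) :
    frozenResolvent β α P s₀ ℓ s
      = ℓ s + β * (P *ᵥ frozenResolvent β α P s₀ ℓ) s + α * frozenResolvent β α P s₀ ℓ s₀ := by
  have hu : neumann β P *ᵥ ℓ = ℓ + β • (P *ᵥ (neumann β P *ᵥ ℓ)) := by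
    conv_lhs => rw [neumann_eq_one_add hP hβ₀ hβ₁]
    simp [add_mulVec, smul_mulVec, mulVec_mulVec]
  have hc : α / (1 - β - α) * (1 - β - α) = α := div_mul_cancel₀ _ fun h => hβα (by linarith)
  simp only [frozenResolvent, mulVec_add, mulVec_smul, one_vecMul_of_mem_rowStochastic hP,
    Pi.add_apply, Pi.smul_apply, Pi.one_apply, smul_eq_mul]
  have hus : (neumann β P *ᵥ ℓ) s = ℓ s + β * (P *ᵥ (neumann β P *ᵥ ℓ)) s := by
    simpa using congrFun hu s
  linear_combination hus + (neumann β P *ᵥ ℓ) s₀ * hc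

lemma dotProduct_frozenResolvent {ρ : S → ℝ} (hρ : ∑ s, ρ s = 1) (s₀ : S) (ℓ : S → ℝ) :
    ρ ⬝ᵥ frozenResolvent β α P s₀ ℓ
      = (ρ ᵥ* neumann β P + (α / (1 - β - α)) • neumann β P s₀) ⬝ᵥ ℓ := by
  simp [frozenResolvent, dotProduct_add, dotProduct_mulVec, add_dotProduct, dotProduct_one, hρ,
    mulVec, dotProduct_smul]

/-- Minimum principle for the frozen operator `W ↦ β P W + α W(s₀) 𝟙`, whose rows sum to
`β + α < 1`: evaluate at a minimiser of `W`. -/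
lemma neg_div_le_of_le_frozen (hP : P ∈ rowStochastic ℝ S) (hβ : 0 ≤ β) (hα : 0 ≤ α)
    (hβα : β + α < 1) {η : ℝ} {W e : S → ℝ} {s₀ : S} (he : ∀ s, -η ≤ e s)
    (hW : ∀ s, e s + β * (P *ᵥ W) s + α * W s₀ ≤ W s) (s : S) :
    -η / (1 - (β + α)) ≤ W s := by
  obtain ⟨m, -, hm⟩ := exists_min_image univ W ⟨s, mem_univ s⟩
  have hPW : W m ≤ (P *ᵥ W) m := by
    calc W m = ∑ x, P m x * W m := by
          rw [← Finset.sum_mul, sum_row_of_mem_rowStochastic hP, one_mul]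
      _ ≤ (P *ᵥ W) m := Finset.sum_le_sum fun x _ =>
        mul_le_mul_of_nonneg_left (hm x (mem_univ x)) (nonneg_of_mem_rowStochastic hP)
  have hWm : -η ≤ (1 - (β + α)) * W m := by
    nlinarith [he m, hW m, mul_le_mul_of_nonneg_left hPW hβ,
      mul_le_mul_of_nonneg_left (hm s₀ (mem_univ s₀)) hα]
  rw [div_le_iff₀ (by linarith)]
  nlinarith [hm s (mem_univ s)]

end FrozenOperator

section Asymptotics

variable {E : Type*} [NormedAddCommGroup E]

lemma isLittleO_mul_of_isBigO {ι : Type*} {l : Filter ι} {f k : ι → ℝ} {g : ι → E}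
    (hf : f =O[l] g) (hk : k =O[l] g) (hg : Tendsto g l (𝓝 0)) :
    (fun i => f i * k i) =o[l] g :=
  isLittleO_norm_right.1 <| ((isBigO_norm_right.2 hf).mul_isLittleO
    (hk.trans_isLittleO ((isLittleO_one_iff ℝ).2 hg))).congr_right fun _ => mul_one _

lemma isFrechetSubgradientWithin_of_isLittleO [InnerProductSpace ℝ E] {f : E → ℝ} {Θ : Set E}
    {x u : E} {η : E → ℝ} (hη : η =o[𝓝[Θ] x] fun y => y - x)
    (hf : ∀ y ∈ Θ, -η y ≤ f y - f x - inner ℝ (y - x) u) :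
    IsFrechetSubgradientWithin f Θ x u := by
  intro ε hε
  obtain ⟨δ, hδ, hball⟩ := Metric.eventually_nhds_iff.1 (eventually_nhdsWithin_iff.1 (hη.def hε))
  refine ⟨δ, hδ, fun h _ hh hmem => ?_⟩
  have hsmall := hball (by rwa [dist_eq_norm, add_sub_cancel_left]) hmem
  have hlower := hf _ hmem
  simp only [add_sub_cancel_left, Real.norm_eq_abs] at hsmall hlower
  linarith [le_abs_self (η (x + h))]

end Asymptotics

section Policy

variable {S A : Type*} [Fintype S] [Fintype A]

lemma pmat_mulVec (π : S → A → ℝ) (p : S → A → S → ℝ) (X : S → ℝ) (s : S) :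
    (pmat π p *ᵥ X) s = ∑ a, π s a * ∑ s', p s a s' * X s' := by
  simp only [mulVec, dotProduct, pmat, of_apply, Finset.sum_mul, Finset.mul_sum]
  rw [Finset.sum_comm]
  exact Finset.sum_congr rfl fun _ _ => Finset.sum_congr rfl fun _ _ => by ring

lemma pmat_mem_rowStochastic [DecidableEq S] {π : S → A → ℝ} {p : S → A → S → ℝ}
    (hπ : ∀ s, π s ∈ stdSimplex ℝ A) (hp : ∀ s a, p s a ∈ stdSimplex ℝ S) :
    pmat π p ∈ rowStochastic ℝ S := by
  refine mem_rowStochastic.2 ⟨fun s s' => ?_, funext fun s => ?_⟩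
  · exact Finset.sum_nonneg fun a _ => mul_nonneg ((hπ s).1 a) ((hp s a).1 s')
  · simp [pmat_mulVec, (hp _ _).2, (hπ s).2]

lemma dvisit_eq_neumann [DecidableEq S] (γ R : ℝ) (π : S → A → ℝ) (p : S → A → S → ℝ) (s s' : S) :
    dvisit γ R π p s s' = (1 - γ * (1 - R)) * neumann (γ * (1 - R)) (pmat π p) s s' := by
  rw [dvisit, neumann, of_apply]
  ring

/-- Freezing the maximum of `V'` at `s₀` can only lower the right-hand side of its robust Bellman
equation. -/
lemma frozen_le_sub_value [Nonempty S] {c : S → A → ℝ} {p : S → A → S → ℝ} {β α : ℝ}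
    (hα : 0 ≤ α) {π π' : S → A → ℝ} (hπ' : ∀ s, π' s ∈ stdSimplex ℝ A) {V V' : S → ℝ}
    {Q : S → A → ℝ} {s₀ : S}
    (hV' : ∀ s, V' s = ∑ a, π' s a * (c s a + β * ∑ s', p s a s' * V' s'
      + α * univ.sup' univ_nonempty V'))
    (hV : ∀ s, V s = ∑ a, π s a * Q s a)
    (hQ : ∀ s a, Q s a = c s a + β * ∑ s', p s a s' * V s' + α * V s₀) (s : S) :
    ∑ a, (π' s a - π s a) * Q s a + β * (pmat π' p *ᵥ (V' - V)) s + α * (V' - V) s₀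
      ≤ (V' - V) s := by
  have hfreeze : ∀ a, Q s a + β * ∑ s', p s a s' * (V' - V) s' + α * (V' - V) s₀
      ≤ c s a + β * ∑ s', p s a s' * V' s' + α * univ.sup' univ_nonempty V' := fun a => by
    have hmax := mul_le_mul_of_nonneg_left (le_sup' V' (mem_univ s₀)) hα
    simp only [hQ, Pi.sub_apply, mul_sub, Finset.sum_sub_distrib]
    linarith
  calc ∑ a, (π' s a - π s a) * Q s a + β * (pmat π' p *ᵥ (V' - V)) s + α * (V' - V) s₀
      = ∑ a, π' s a * (Q s a + β * ∑ s', p s a s' * (V' - V) s' + α * (V' - V) s₀) - V s := by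
        simp only [pmat_mulVec, hV, sub_mul, Finset.sum_sub_distrib, mul_add,
          Finset.sum_add_distrib, ← Finset.sum_mul, (hπ' s).2, Finset.mul_sum]
        ring_nf
    _ ≤ V' s - V s := by
        rw [hV' s]
        exact sub_le_sub_right (Finset.sum_le_sum fun a _ =>
          mul_le_mul_of_nonneg_left (hfreeze a) ((hπ' s).1 a)) _

lemma inner_policyGradient [DecidableEq S] {E : Type*} [NormedAddCommGroup E]
    [InnerProductSpace ℝ E] {γ R : ℝ} (hγ : γ ≠ 1) (hγR : 1 - γ + γ * R ≠ 0)
    (π : S → A → ℝ) (p : S → A → S → ℝ) (Q : S → A → ℝ) (D : S → A → E) (ρ : S → ℝ)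
    (s₀ : S) (h : E) :
    inner ℝ h ((γ * R / ((1 - γ) * (1 - γ + γ * R))) •
          ∑ s, ∑ a, (dvisit γ R π p s₀ s * Q s a) • D s a
        + (1 / (1 - γ + γ * R)) •
          ∑ s, ∑ a, ((∑ s₁, ρ s₁ * dvisit γ R π p s₁ s) * Q s a) • D s a)
      = (ρ ᵥ* neumann (γ * (1 - R)) (pmat π p)
          + (γ * R / (1 - γ * (1 - R) - γ * R)) • neumann (γ * (1 - R)) (pmat π p) s₀)
        ⬝ᵥ fun s => ∑ a, Q s a * inner ℝ h (D s a) := by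
  have h1γ : 1 - γ ≠ 0 := sub_ne_zero.2 (Ne.symm hγ)
  rw [show 1 - γ * (1 - R) - γ * R = 1 - γ by ring, add_dotProduct, smul_dotProduct,
    ← dotProduct_mulVec]
  simp only [inner_add_right, inner_smul_right, inner_sum, dvisit_eq_neumann, dotProduct, mulVec,
    Finset.mul_sum, Finset.sum_mul, smul_eq_mul]
  rw [add_comm]
  congr 1
  · conv_rhs => rw [Finset.sum_comm]
    refine Finset.sum_congr rfl fun s _ => ?_
    rw [Finset.sum_comm]
    refine Finset.sum_congr rfl fun s₁ _ => Finset.sum_congr rfl fun a _ => ?_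
    field_simp
    ring
  · refine Finset.sum_congr rfl fun s _ => Finset.sum_congr rfl fun a _ => ?_
    field_simp
    ring

/-- The amount by which `frozenResolvent β α (pmat π p) s₀ ℓ` fails to solve the frozen Bellman
equation of `π'` with source `∑ₐ (π' - π) Q`. -/
noncomputable def frozenDefect [DecidableEq S] (β α : ℝ) (p : S → A → S → ℝ) (π π' : S → A → ℝ)
    (Q : S → A → ℝ) (s₀ : S) (ℓ : S → ℝ) (s : S) : ℝ :=
  ∑ a, (π' s a - π s a) * Q s a - ℓ s
    + β * ((pmat π' p - pmat π p) *ᵥ frozenResolvent β α (pmat π p) s₀ ℓ) s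

lemma neg_div_le_sub_frozenResolvent [Nonempty S] [DecidableEq S] {c : S → A → ℝ}
    {p : S → A → S → ℝ} (hp : ∀ s a, p s a ∈ stdSimplex ℝ S) {β α : ℝ} (hβ₀ : 0 ≤ β)
    (hα : 0 ≤ α) (hβα : β + α < 1) {π π' : S → A → ℝ} (hπ : ∀ s, π s ∈ stdSimplex ℝ A)
    (hπ' : ∀ s, π' s ∈ stdSimplex ℝ A) {V V' : S → ℝ} {Q : S → A → ℝ} {s₀ : S}
    (hV' : ∀ s, V' s = ∑ a, π' s a * (c s a + β * ∑ s', p s a s' * V' s'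
      + α * univ.sup' univ_nonempty V'))
    (hV : ∀ s, V s = ∑ a, π s a * Q s a)
    (hQ : ∀ s a, Q s a = c s a + β * ∑ s', p s a s' * V s' + α * V s₀) (ℓ : S → ℝ) (s : S) :
    -(∑ x, |frozenDefect β α p π π' Q s₀ ℓ x|) / (1 - (β + α))
      ≤ V' s - V s - frozenResolvent β α (pmat π p) s₀ ℓ s := by
  set Y := frozenResolvent β α (pmat π p) s₀ ℓ
  refine neg_div_le_of_le_frozen (pmat_mem_rowStochastic hπ' hp) hβ₀ hα hβα
    (W := V' - V - Y) (e := frozenDefect β α p π π' Q s₀ ℓ) (s₀ := s₀)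
    (fun x => ?_) (fun x => ?_) s
  · exact (neg_abs_le _).trans' <| neg_le_neg <|
      single_le_sum (fun y _ => abs_nonneg (frozenDefect β α p π π' Q s₀ ℓ y)) (mem_univ x)
  · have hZ := frozen_le_sub_value hα hπ' hV' hV hQ x
    have hY := frozenResolvent_eq (pmat_mem_rowStochastic hπ hp) hβ₀ (by linarith [hα])
      hβα.ne (α := α) s₀ ℓ x
    simp only [frozenDefect, Pi.sub_apply, mulVec_sub, sub_mulVec] at hZ hY ⊢
    linarith

lemma isBigO_frozenResolvent [DecidableEq S] {ι F : Type*} [Norm F] {l : Filter ι} {g : ι → F}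
    (β α : ℝ) (P : Matrix S S ℝ) (s₀ : S) {ℓ : ι → S → ℝ} (hℓ : ∀ s, (fun i => ℓ i s) =O[l] g)
    (s : S) : (fun i => frozenResolvent β α P s₀ (ℓ i) s) =O[l] g := by
  simp only [frozenResolvent, Pi.add_apply, Pi.smul_apply, Pi.one_apply, smul_eq_mul, mul_one,
    mulVec, dotProduct]
  exact (IsBigO.fun_sum fun x _ => (hℓ x).const_mul_left _).add
    ((IsBigO.fun_sum fun x _ => (hℓ x).const_mul_left _).const_mul_left _)

lemma isLittleO_frozenDefect [DecidableEq S] {E : Type*} [NormedAddCommGroup E]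
    [InnerProductSpace ℝ E] [CompleteSpace E] {Θ : Set E} {θ : E} {π : E → S → A → ℝ}
    {D : S → A → E}
    (hD : ∀ s a, HasGradientWithinAt (fun y => π y s a) (D s a) Θ θ) (β α : ℝ)
    (p : S → A → S → ℝ) (Q : S → A → ℝ) (s₀ : S) :
    (fun y => ∑ s, |frozenDefect β α p (π θ) (π y) Q s₀
        (fun s => ∑ a, Q s a * inner ℝ (y - θ) (D s a)) s|) =o[𝓝[Θ] θ] fun y => y - θ := by
  have hπ : ∀ s a, (fun y => π y s a - π θ s a) =O[𝓝[Θ] θ] fun y => y - θ :=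
    fun s a => (hD s a).hasFDerivWithinAt.isBigO_sub
  have hℓ : ∀ s, (fun y => ∑ a, Q s a * inner ℝ (y - θ) (D s a)) =O[𝓝[Θ] θ] fun y => y - θ :=
    fun s => IsBigO.fun_sum fun a _ => IsBigO.const_mul_left
      (((innerSL ℝ (D s a)).isBigO_sub _ θ).congr_left fun y => real_inner_comm _ _) _
  have hlinear : ∀ s, (fun y => ∑ a, (π y s a - π θ s a) * Q s a
      - ∑ a, Q s a * inner ℝ (y - θ) (D s a)) =o[𝓝[Θ] θ] fun y => y - θ := fun s =>
    (IsLittleO.fun_sum fun a _ =>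
      (hasGradientWithinAt_iff_isLittleO.1 (hD s a)).const_mul_left (Q s a)).congr_left fun y => by
        rw [← Finset.sum_sub_distrib]
        exact Finset.sum_congr rfl fun a _ => by rw [real_inner_comm]; ring
  have hpmat : ∀ s x, (fun y => (pmat (π y) p - pmat (π θ) p) s x) =O[𝓝[Θ] θ] fun y => y - θ :=
    fun s x => (IsBigO.fun_sum fun a _ => (hπ s a).const_mul_left (p s a x)).congr_left fun y => by
      simp only [pmat, Matrix.sub_apply, of_apply, ← Finset.sum_sub_distrib]
      exact Finset.sum_congr rfl fun a _ => by ring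
  have hsmall : Tendsto (fun y => y - θ) (𝓝[Θ] θ) (𝓝 0) :=
    tendsto_sub_nhds_zero_iff.2 (tendsto_nhdsWithin_of_tendsto_nhds tendsto_id)
  refine IsLittleO.fun_sum fun s _ => IsLittleO.abs_left ?_
  simp only [frozenDefect, mulVec, dotProduct]
  exact (hlinear s).add <| IsLittleO.const_mul_left (IsLittleO.fun_sum fun x _ =>
    isLittleO_mul_of_isBigO (hpmat s x) (isBigO_frozenResolvent β α _ s₀ hℓ x) hsmall) β

lemma le_dotProduct_of_mem_stdSimplex {ρ W : S → ℝ} (hρ : ρ ∈ stdSimplex ℝ S) {m : ℝ}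
    (hW : ∀ s, m ≤ W s) : m ≤ ρ ⬝ᵥ W :=
  calc m = ∑ s, ρ s * m := by rw [← Finset.sum_mul, hρ.2, one_mul]
    _ ≤ ρ ⬝ᵥ W := Finset.sum_le_sum fun s _ => mul_le_mul_of_nonneg_left (hW s) (hρ.1 s)

end Policy

theorem stmt_6_general {S A : Type*} [Fintype S] [Fintype A] [Nonempty S] [DecidableEq S]
    {N : ℕ}
    (c : S → A → ℝ)
    (γ : ℝ) (hγ : γ ∈ Set.Ico (0 : ℝ) 1)
    (R : ℝ) (hR : R ∈ Set.Icc (0 : ℝ) 1)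
    (p : S → A → S → ℝ) (hp : ∀ s a, p s a ∈ stdSimplex ℝ S)
    (Θ : Set (EuclideanSpace ℝ (Fin N)))
    (π : EuclideanSpace ℝ (Fin N) → S → A → ℝ)
    (hπ : ∀ θ ∈ Θ, ∀ s, π θ s ∈ stdSimplex ℝ A)
    (D : EuclideanSpace ℝ (Fin N) → S → A → EuclideanSpace ℝ (Fin N))
    (hD : ∀ θ ∈ Θ, ∀ s a, HasGradientWithinAt (fun θ' => π θ' s a) (D θ s a) Θ θ)
    (V : EuclideanSpace ℝ (Fin N) → S → ℝ)
    (hV : ∀ θ ∈ Θ, ∀ s, V θ s = ∑ a, π θ s a * (c s a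
      + γ * (1 - R) * ∑ s', p s a s' * V θ s'
      + γ * R * univ.sup' univ_nonempty (V θ)))
    (Q : EuclideanSpace ℝ (Fin N) → S → A → ℝ)
    (hQ : ∀ θ ∈ Θ, ∀ s a, Q θ s a = c s a + γ * (1 - R) * ∑ s', p s a s' * V θ s'
      + γ * R * univ.sup' univ_nonempty (V θ))
    (ρ : S → ℝ) (hρ : ρ ∈ stdSimplex ℝ S)
    (θ : EuclideanSpace ℝ (Fin N)) (hθ : θ ∈ Θ)
    (sθ : S) (hsθ : ∀ s, V θ s ≤ V θ sθ) :
    IsFrechetSubgradientWithin (fun θ' => ∑ s, ρ s * V θ' s) Θ θ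
      ((γ * R / ((1 - γ) * (1 - γ + γ * R))) •
          ∑ s, ∑ a, (dvisit γ R (π θ) p sθ s * Q θ s a) • D θ s a
        + (1 / (1 - γ + γ * R)) •
          ∑ s, ∑ a, ((∑ s₀, ρ s₀ * dvisit γ R (π θ) p s₀ s) * Q θ s a) • D θ s a) := by
  have hβ : 0 ≤ γ * (1 - R) := mul_nonneg hγ.1 (sub_nonneg.2 hR.2)
  have hα : 0 ≤ γ * R := mul_nonneg hγ.1 hR.1
  have hβα : γ * (1 - R) + γ * R < 1 := by linarith [hγ.2]
  have hsup : univ.sup' univ_nonempty (V θ) = V θ sθ :=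
    le_antisymm (sup'_le _ _ fun s _ => hsθ s) (le_sup' _ (mem_univ sθ))
  have hVQ : ∀ s, V θ s = ∑ a, π θ s a * Q θ s a := fun s =>
    (hV θ hθ s).trans (Finset.sum_congr rfl fun a _ => by rw [hQ θ hθ s a])
  have hQ' : ∀ s a, Q θ s a = c s a + γ * (1 - R) * ∑ s', p s a s' * V θ s' + γ * R * V θ sθ :=
    fun s a => by rw [hQ θ hθ s a, hsup]
  refine isFrechetSubgradientWithin_of_isLittleO
    ((isLittleO_frozenDefect (hD θ hθ) (γ * (1 - R)) (γ * R) p (Q θ) sθ).const_mul_left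
      (1 - (γ * (1 - R) + γ * R))⁻¹) fun y hy => ?_
  rw [inner_policyGradient hγ.2.ne (by linarith), ← dotProduct_frozenResolvent hρ.2]
  have hlower := neg_div_le_sub_frozenResolvent hp hβ hα hβα (hπ θ hθ) (hπ y hy) (hV y hy) hVQ hQ'
    (fun s => ∑ a, Q θ s a * inner ℝ (y - θ) (D θ s a))
  calc _ ≤ ρ ⬝ᵥ fun s => V y s - V θ s
        - frozenResolvent (γ * (1 - R)) (γ * R) (pmat (π θ) p) sθ
          (fun s => ∑ a, Q θ s a * inner ℝ (y - θ) (D θ s a)) s :=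
        le_dotProduct_of_mem_stdSimplex hρ fun s => le_of_eq_of_le (by ring) (hlower s)
    _ = _ := by simp only [dotProduct, mul_sub, Finset.sum_sub_distrib]

/-- **Robust policy gradient, subgradient part (Theorem 1(2))**: under Assumption 1, for any
distribution `ρ` on `S`, any `θ ∈ Θ` and any state `s_θ` maximizing `V^{π_θ}`, the vector
`ψ_ρ(θ) = (γR/((1-γ)(1-γ+γR)))·∑_s d^{π_θ}_{s_θ}(s)·∑_a ∇π_θ(a|s)·Q^{π_θ}(s,a)
  + (1/(1-γ+γR))·∑_s d^{π_θ}_ρ(s)·∑_a ∇π_θ(a|s)·Q^{π_θ}(s,a)`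
is a Fréchet subgradient of `J_ρ` at `θ` relative to `Θ`. -/
theorem stmt_6 {S A : Type*} [Fintype S] [Fintype A] [Nonempty S] [Nonempty A] [DecidableEq S]
    {N : ℕ}
    (c : S → A → ℝ) (hc : ∀ s a, c s a ∈ Set.Icc (0 : ℝ) 1)
    (γ : ℝ) (hγ : γ ∈ Set.Ico (0 : ℝ) 1)
    (R : ℝ) (hR : R ∈ Set.Icc (0 : ℝ) 1)
    (p : S → A → S → ℝ) (hp : ∀ s a, p s a ∈ stdSimplex ℝ S)
    (Θ : Set (EuclideanSpace ℝ (Fin N))) (hΘ : Convex ℝ Θ)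
    (π : EuclideanSpace ℝ (Fin N) → S → A → ℝ)
    (hπ : ∀ θ ∈ Θ, ∀ s, π θ s ∈ stdSimplex ℝ A)
    (kπ : ℝ) (hkπ : 0 < kπ)
    (D : EuclideanSpace ℝ (Fin N) → S → A → EuclideanSpace ℝ (Fin N))
    (hD : ∀ θ ∈ Θ, ∀ s a, HasGradientWithinAt (fun θ' => π θ' s a) (D θ s a) Θ θ)
    (hDb : ∀ θ ∈ Θ, ∀ s a, ‖D θ s a‖ ≤ kπ)
    (V : EuclideanSpace ℝ (Fin N) → S → ℝ)
    (hV : ∀ θ ∈ Θ, ∀ s, V θ s = ∑ a, π θ s a * (c s a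
      + γ * (1 - R) * ∑ s', p s a s' * V θ s'
      + γ * R * univ.sup' univ_nonempty (V θ)))
    (Q : EuclideanSpace ℝ (Fin N) → S → A → ℝ)
    (hQ : ∀ θ ∈ Θ, ∀ s a, Q θ s a = c s a + γ * (1 - R) * ∑ s', p s a s' * V θ s'
      + γ * R * univ.sup' univ_nonempty (V θ))
    (ρ : S → ℝ) (hρ : ρ ∈ stdSimplex ℝ S)
    (θ : EuclideanSpace ℝ (Fin N)) (hθ : θ ∈ Θ)
    (sθ : S) (hsθ : ∀ s, V θ s ≤ V θ sθ) :
    IsFrechetSubgradientWithin (fun θ' => ∑ s, ρ s * V θ' s) Θ θ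
      ((γ * R / ((1 - γ) * (1 - γ + γ * R))) •
          ∑ s, ∑ a, (dvisit γ R (π θ) p sθ s * Q θ s a) • D θ s a
        + (1 / (1 - γ + γ * R)) •
          ∑ s, ∑ a, ((∑ s₀, ρ s₀ * dvisit γ R (π θ) p s₀ s) * Q θ s a) • D θ s a) :=
  stmt_6_general c γ hγ R hR p hp Θ π hπ D hD V hV Q hQ ρ hρ θ hθ sθ hsθ
end
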